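/- arXiv:2406.00424 — 8 statements merged into one kernel-verified Lean document; each statement's English description precedes it below -/
import Mathlib

section
/- For any integer b ≥ 2 and any integer x with 3 ≤ x ≤ 4b, the inequality ⌈x/2⌉ − 1 ≥ ⌈(b−1)/⌊4b/x⌋⌉ holds, where ⌈·⌉ and ⌊·⌋ denote the ceiling and floor of the indicated rational numbers. -/
/-- Lemma 1 of the paper: for any integer `b ≥ 2` and any integer `x` with
`3 ≤ x ≤ 4b`, we have `⌈x/2⌉ - 1 ≥ ⌈(b-1)/⌊4b/x⌋⌉`, where the floors and
ceilings are taken of the indicated rational numbers. -/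
theorem lemma1 (b x : ℤ) (hb : 2 ≤ b) (hx3 : 3 ≤ x) (hx4b : x ≤ 4 * b) :
    ⌈(x : ℚ) / 2⌉ - 1 ≥ ⌈((b : ℚ) - 1) / ((⌊(4 * (b : ℚ)) / (x : ℚ)⌋ : ℤ) : ℚ)⌉ := by
  set F : ℤ := ⌊(4 * (b : ℚ)) / (x : ℚ)⌋ with hF
  set M : ℤ := ⌈(x : ℚ) / 2⌉ with hM
  have hxpos : (0 : ℚ) < (x : ℚ) := by exact_mod_cast lt_of_lt_of_le (by norm_num) hx3
  -- F ≥ 1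
  have hF1 : 1 ≤ F := by
    rw [hF, Int.le_floor]
    rw [le_div_iff₀ hxpos]
    push_cast
    exact_mod_cast by linarith [hx4b]
  -- F * x ≤ 4 * b
  have hFx : F * x ≤ 4 * b := by
    have h := Int.floor_le ((4 * (b : ℚ)) / (x : ℚ))
    rw [← hF] at h
    have h2 : (F : ℚ) * x ≤ 4 * b := by
      calc (F : ℚ) * x ≤ ((4 * (b : ℚ)) / (x : ℚ)) * x := by
            exact mul_le_mul_of_nonneg_right h (le_of_lt hxpos)
        _ = 4 * b := by field_simp
    exact_mod_cast h2
  -- 4 * b < (F + 1) * x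
  have hFx2 : 4 * b < (F + 1) * x := by
    have h := Int.lt_floor_add_one ((4 * (b : ℚ)) / (x : ℚ))
    rw [← hF] at h
    have h2 : 4 * (b : ℚ) < ((F : ℚ) + 1) * x := by
      have := (div_lt_iff₀ hxpos).mp h
      linarith
    exact_mod_cast h2
  -- 2 * M ≥ x and 2 * M ≤ x + 1
  have hM1 : x ≤ 2 * M := by
    have h := Int.le_ceil ((x : ℚ) / 2)
    rw [← hM] at h
    have h2 : (x : ℚ) ≤ 2 * M := by linarith
    exact_mod_cast h2
  have hM2 : 2 * M ≤ x + 1 := by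
    have h := Int.ceil_lt_add_one ((x : ℚ) / 2)
    rw [← hM] at h
    have h2 : 2 * (M : ℚ) < x + 2 := by linarith
    have : (2 * M : ℤ) < x + 2 := by exact_mod_cast h2
    omega
  -- reduce the goal to an integer inequality
  have hFQpos : (0 : ℚ) < (F : ℚ) := by exact_mod_cast lt_of_lt_of_le zero_lt_one hF1
  have key : b - 1 ≤ (M - 1) * F := by
    rcases eq_or_lt_of_le hx3 with h3 | h4
    · -- x = 3
      have hx : x = 3 := h3.symm
      subst hx
      have hMeq : M = 2 := by omega
      nlinarith
    · -- x ≥ 4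
      have hx4 : 4 ≤ x := h4
      nlinarith [mul_nonneg (by omega : (0:ℤ) ≤ x - 4) (by omega : (0:ℤ) ≤ F - 1)]
  rw [ge_iff_le, Int.ceil_le]
  rw [div_le_iff₀ hFQpos]
  push_cast
  have : ((b : ℚ) - 1) ≤ ((M - 1) * F : ℤ) := by exact_mod_cast key
  push_cast at this
  linarith
end

section
/- For any integer b ≥ 2 and any integer x with 3 ≤ x ≤ 4b, the inequality (⌈x/2⌉ − 1) · ⌊4b/x⌋ ≥ b − 1 holds. -/
/-- Reduced form of Lemma 1: for any integer `b ≥ 2` and any integer `x` with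
`3 ≤ x ≤ 4b`, we have `(⌈x/2⌉ - 1) * ⌊4b/x⌋ ≥ b - 1`. -/
theorem lemma1_reduced (b x : ℤ) (hb : 2 ≤ b) (hx3 : 3 ≤ x) (hx4b : x ≤ 4 * b) :
    (⌈(x : ℚ) / 2⌉ - 1) * ⌊(4 * (b : ℚ)) / (x : ℚ)⌋ ≥ b - 1 := by
  set m : ℤ := ⌈(x : ℚ) / 2⌉ with hm
  set q : ℤ := ⌊(4 * (b : ℚ)) / (x : ℚ)⌋ with hq
  have hxpos : (0 : ℚ) < (x : ℚ) := by exact_mod_cast lt_of_lt_of_le (by norm_num) hx3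
  -- x ≤ 2m
  have h1 : (x : ℚ) / 2 ≤ (m : ℚ) := Int.le_ceil _
  have h1' : x ≤ 2 * m := by
    have : (x : ℚ) ≤ 2 * (m : ℚ) := by linarith
    exact_mod_cast this
  -- 4b < (q+1)x
  have h2 : (4 * (b : ℚ)) / (x : ℚ) < (q : ℚ) + 1 := Int.lt_floor_add_one _
  have h2' : 4 * b < (q + 1) * x := by
    have : (4 * (b : ℚ)) < ((q : ℚ) + 1) * (x : ℚ) := by
      rw [div_lt_iff₀ hxpos] at h2; linarith
    exact_mod_cast this
  -- m ≥ 2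
  have h3 : 2 ≤ m := by
    have : (1 : ℤ) < m := by
      rw [hm, Int.lt_ceil]
      have : (3 : ℚ) ≤ (x : ℚ) := by exact_mod_cast hx3
      push_cast
      linarith
    linarith
  -- q ≥ 1
  have h4 : 1 ≤ q := by
    rw [hq, Int.le_floor]
    rw [le_div_iff₀ hxpos]
    push_cast
    have : (x : ℚ) ≤ 4 * (b : ℚ) := by exact_mod_cast hx4b
    linarith
  nlinarith [mul_nonneg (by linarith : (0:ℤ) ≤ m - 2) (by linarith : (0:ℤ) ≤ q - 1)]
end

section
/- For any integer b ≥ 2 and any integer y with 2 ≤ y ≤ 2b, the inequality (y − 1) · ⌊2b/y⌋ ≥ b − 1 holds. -/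
/-- Even case (`x = 2y`) of the reduced form of Lemma 1: for any integer `b ≥ 2`
and any integer `y` with `2 ≤ y ≤ 2b`, we have `(y - 1) * ⌊2b/y⌋ ≥ b - 1`. -/
theorem lemma1_even_case (b y : ℤ) (hb : 2 ≤ b) (hy2 : 2 ≤ y) (hy2b : y ≤ 2 * b) :
    (y - 1) * ⌊(2 * (b : ℚ)) / (y : ℚ)⌋ ≥ b - 1 := by
  have hy0 : (0 : ℚ) < (y : ℚ) := by exact_mod_cast by linarith
  set q : ℤ := ⌊(2 * (b : ℚ)) / (y : ℚ)⌋ with hq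
  have h1 : (q : ℚ) ≤ 2 * (b : ℚ) / (y : ℚ) := Int.floor_le _
  have h2 : 2 * (b : ℚ) / (y : ℚ) < (q : ℚ) + 1 := Int.lt_floor_add_one _
  have h1' : y * q ≤ 2 * b := by
    have : (y : ℚ) * q ≤ 2 * b := by
      have := (le_div_iff₀ hy0).mp h1; linarith
    exact_mod_cast this
  have h2' : 2 * b < y * (q + 1) := by
    have : (2 : ℚ) * b < y * (q + 1) := by
      have := (div_lt_iff₀ hy0).mp h2; linarith
    exact_mod_cast this
  have hq1 : 1 ≤ q := by nlinarith
  rcases eq_or_lt_of_le hq1 with h | h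
  · nlinarith
  · nlinarith [mul_nonneg (by linarith : (0:ℤ) ≤ y - 2) (by linarith : (0:ℤ) ≤ q - 2)]
end

section
/- For any integer b ≥ 2 and any integer y with 1 ≤ y ≤ 2b − 1, the inequality y · ⌊4b/(2y+1)⌋ ≥ b − 1 holds. -/
/-- Odd case (`x = 2y + 1`) of the reduced form of Lemma 1: for any integer
`b ≥ 2` and any integer `y` with `1 ≤ y ≤ 2b - 1`, we have
`y * ⌊4b/(2y+1)⌋ ≥ b - 1`. -/
theorem lemma1_odd_case (b y : ℤ) (hb : 2 ≤ b) (hy1 : 1 ≤ y) (hy2b : y ≤ 2 * b - 1) :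
    y * ⌊(4 * (b : ℚ)) / (2 * (y : ℚ) + 1)⌋ ≥ b - 1 := by
  set q := ⌊(4 * (b : ℚ)) / (2 * (y : ℚ) + 1)⌋ with hq
  have hdpos : (0:ℚ) < 2 * (y:ℚ) + 1 := by
    have : (1:ℚ) ≤ (y:ℚ) := by exact_mod_cast hy1
    linarith
  have h1 : (q:ℚ) * (2*(y:ℚ)+1) ≤ 4*(b:ℚ) := by
    rw [← le_div_iff₀ hdpos]; exact Int.floor_le _
  have h2 : (4:ℚ)*(b:ℚ) < ((q:ℚ)+1) * (2*(y:ℚ)+1) := by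
    rw [← div_lt_iff₀ hdpos]; exact Int.lt_floor_add_one _
  have h1' : q * (2*y+1) ≤ 4*b := by exact_mod_cast h1
  have h2' : 4*b < (q+1)*(2*y+1) := by exact_mod_cast h2
  rcases le_or_gt (b-1) y with h | h
  · have hq1 : 1 ≤ q := by nlinarith
    nlinarith
  · -- y ≤ b - 2
    have h3 : 4*b - 2*y ≤ q * (2*y+1) := by nlinarith
    have h4 : 0 ≤ (y-1) * (b-2-y) := by
      apply mul_nonneg <;> omega
    nlinarith [mul_le_mul_of_nonneg_left h3 (by omega : (0:ℤ) ≤ y)]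
end

section
/- Let n ≥ 2, b ≥ 2, and B be positive integers, and define the round sizes s : ℕ → ℕ by s(0) = n and s(r+1) = ⌈s(r)/2⌉, and the per-round pull counts J(r) = ⌊(b·B)/(s(r)·⌈log₂ n⌉)⌋. If b·B ≥ n·⌈log₂ n⌉ and B ≥ 4·⌈log₂ n⌉, then for every integer r with r < ⌈log₂ n⌉ − 1 and every integer z with 0 ≤ z < b, the inequality s(r+1) − ⌈(b−z)/J(r+1)⌉ ≥ ⌈z/J(r)⌉ holds (in particular J(r) ≥ 1 and J(r+1) ≥ 1, so the ceilings are well defined). -/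
set_option maxHeartbeats 1000000

private lemma ceil_div_le {x : ℚ} {k c : ℤ} (hc : 0 < c) (h : x ≤ (k : ℚ) * (c : ℚ)) :
    ⌈x / (c : ℚ)⌉ ≤ k := by
  rw [Int.ceil_le]
  rw [div_le_iff₀ (by exact_mod_cast hc)]
  exact h

private lemma ceil_div_gt (x : ℚ) {c : ℤ} (hc : 0 < c) :
    ((⌈x / (c : ℚ)⌉ : ℚ) - 1) * (c : ℚ) < x := by
  have h := Int.ceil_lt_add_one (x / (c : ℚ))
  have hc' : (0 : ℚ) < (c : ℚ) := by exact_mod_cast hc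
  have h2 : ((⌈x / (c : ℚ)⌉ : ℚ) - 1) < x / c := by linarith
  exact (lt_div_iff₀ hc').mp h2

/-- Key proposition (inequality (3)) in the proof of Theorem 1. With round sizes
`s 0 = n`, `s (r+1) = ⌈s r / 2⌉` and per-round pull counts
`J r = ⌊(b·B)/(s r · ⌈log₂ n⌉)⌋`, if `b·B ≥ n·⌈log₂ n⌉` (C1) and
`B ≥ 4·⌈log₂ n⌉` (C2), then for every round `r < ⌈log₂ n⌉ - 1` and every
`0 ≤ z < b`, we have `s (r+1) - ⌈(b-z)/J(r+1)⌉ ≥ ⌈z/J r⌉`. -/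
theorem no_incorrect_promotion (n b B : ℕ) (hn : 2 ≤ n) (hb : 2 ≤ b) (hB : 1 ≤ B)
    (s : ℕ → ℕ) (hs0 : s 0 = n)
    (hs : ∀ r, (s (r + 1) : ℤ) = ⌈(s r : ℚ) / 2⌉)
    (J : ℕ → ℤ)
    (hJ : ∀ r, J r = ⌊((b : ℚ) * (B : ℚ)) / ((s r : ℚ) * (Nat.clog 2 n : ℚ))⌋)
    (hC1 : n * Nat.clog 2 n ≤ b * B)
    (hC2 : 4 * Nat.clog 2 n ≤ B)
    (r : ℕ) (hr : (r : ℤ) < (Nat.clog 2 n : ℤ) - 1)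
    (z : ℕ) (hz : z < b) :
    (s (r + 1) : ℤ) - ⌈((b : ℚ) - (z : ℚ)) / ((J (r + 1) : ℤ) : ℚ)⌉
      ≥ ⌈(z : ℚ) / ((J r : ℤ) : ℚ)⌉ := by
  set L : ℕ := Nat.clog 2 n with hLdef
  have hL1 : 1 ≤ L := Nat.clog_pos one_lt_two (by omega)
  have hstep : ∀ i, s i ≤ 2 * s (i + 1) ∧ 2 * s (i + 1) ≤ s i + 1 := by
    intro i
    have h := hs i
    constructor
    · have h1 := Int.le_ceil ((s i : ℚ) / 2)
      rw [← h] at h1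
      have h2 : (s i : ℚ) ≤ 2 * (s (i + 1) : ℚ) := by push_cast at h1 ⊢; linarith
      exact_mod_cast h2
    · have h1 := Int.ceil_lt_add_one ((s i : ℚ) / 2)
      rw [← h] at h1
      have h2 : 2 * (s (i + 1) : ℚ) < (s i : ℚ) + 2 := by push_cast at h1 ⊢; linarith
      have h3 : 2 * s (i + 1) < s i + 2 := by exact_mod_cast h2
      omega
  have hpow : ∀ i, n ≤ 2 ^ i * s i := by
    intro i
    induction i with
    | zero => simp [hs0]
    | succ i ih =>
      have h1 := (hstep i).1
      calc n ≤ 2 ^ i * s i := ih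
        _ ≤ 2 ^ i * (2 * s (i + 1)) := Nat.mul_le_mul_left _ h1
        _ = 2 ^ (i + 1) * s (i + 1) := by ring
  have hspos : ∀ i, 1 ≤ s i := by
    intro i
    have := hpow i
    rcases Nat.eq_zero_or_pos (s i) with h | h
    · rw [h] at this; omega
    · exact h
  have hmono : ∀ i, s (i + 1) ≤ s i := by
    intro i
    have h1 := (hstep i).2
    have h2 := hspos (i + 1)
    omega
  have hsn : ∀ i, s i ≤ n := by
    intro i
    induction i with
    | zero => omega
    | succ i ih => exact le_trans (hmono i) ih
  have hr2 : r + 2 ≤ L := by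
    have h : (r : ℤ) + 2 ≤ (L : ℤ) := by omega
    exact_mod_cast h
  have hnlb : 2 ^ (r + 1) < n := by
    have h1 : 2 ^ (L - 1) < n := Nat.pow_pred_clog_lt_self one_lt_two (by omega)
    have h2 : 2 ^ (r + 1) ≤ 2 ^ (L - 1) := Nat.pow_le_pow_right (by norm_num) (by omega)
    omega
  have hm2n : 2 ≤ s (r + 1) := by
    by_contra hcon
    push_neg at hcon
    have h1 := hpow (r + 1)
    have h2 : 2 ^ (r + 1) * s (r + 1) ≤ 2 ^ (r + 1) * 1 := Nat.mul_le_mul_left _ (by omega)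
    omega
  have hJfact : ∀ i, J i * ((s i : ℤ) * (L : ℤ)) ≤ (b : ℤ) * (B : ℤ) ∧
      (b : ℤ) * (B : ℤ) < (J i + 1) * ((s i : ℤ) * (L : ℤ)) := by
    intro i
    have h := hJ i
    have hd : (0 : ℚ) < (s i : ℚ) * (L : ℚ) := by
      have h1 : (0:ℚ) < (s i : ℚ) := by exact_mod_cast hspos i
      have h2 : (0:ℚ) < (L : ℚ) := by exact_mod_cast hL1
      positivity
    constructor
    · have h1 := Int.floor_le ((b : ℚ) * (B : ℚ) / ((s i : ℚ) * (L : ℚ)))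
      rw [← h] at h1
      rw [le_div_iff₀ hd] at h1
      exact_mod_cast h1
    · have h1 := Int.lt_floor_add_one ((b : ℚ) * (B : ℚ) / ((s i : ℚ) * (L : ℚ)))
      rw [← h] at h1
      rw [div_lt_iff₀ hd] at h1
      exact_mod_cast h1
  have hLz1 : (1 : ℤ) ≤ (L : ℤ) := by exact_mod_cast hL1
  have hbz2 : (2 : ℤ) ≤ (b : ℤ) := by exact_mod_cast hb
  have hm2' : (2 : ℤ) ≤ (s (r + 1) : ℤ) := by exact_mod_cast hm2n
  have hsrm : (s (r + 1) : ℤ) ≤ (s r : ℤ) := by exact_mod_cast hmono r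
  have hsr2m : (s r : ℤ) ≤ 2 * (s (r + 1) : ℤ) := by exact_mod_cast (hstep r).1
  have hsrn : (s r : ℤ) ≤ (n : ℤ) := by exact_mod_cast hsn r
  have hC1' : (n : ℤ) * (L : ℤ) ≤ (b : ℤ) * (B : ℤ) := by exact_mod_cast hC1
  have hC2' : 4 * (L : ℤ) ≤ (B : ℤ) := by exact_mod_cast hC2
  have hbB4 : 4 * (b : ℤ) * (L : ℤ) ≤ (b : ℤ) * (B : ℤ) := by
    have h := mul_le_mul_of_nonneg_left hC2' (by linarith : (0:ℤ) ≤ (b : ℤ))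
    linarith [h]
  obtain ⟨hJ0a, hJ0b⟩ := hJfact r
  obtain ⟨hJ1a, hJ1b⟩ := hJfact (r + 1)
  have hsrLpos : (0 : ℤ) < (s r : ℤ) * (L : ℤ) :=
    mul_pos (by linarith) (by linarith)
  have hmLpos : (0 : ℤ) < (s (r + 1) : ℤ) * (L : ℤ) :=
    mul_pos (by linarith) (by linarith)
  have hJ0pos : 1 ≤ J r := by
    have h1 : (s r : ℤ) * (L : ℤ) ≤ (b : ℤ) * (B : ℤ) :=
      le_trans (mul_le_mul_of_nonneg_right hsrn (by linarith)) hC1'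
    have h2 : 1 * ((s r : ℤ) * (L : ℤ)) < (J r + 1) * ((s r : ℤ) * (L : ℤ)) := by
      linarith
    have h3 := lt_of_mul_lt_mul_right h2 (le_of_lt hsrLpos)
    linarith
  have hJ01 : J r ≤ J (r + 1) := by
    have h0 : (s (r + 1) : ℤ) * (L : ℤ) ≤ (s r : ℤ) * (L : ℤ) :=
      mul_le_mul_of_nonneg_right hsrm (by linarith)
    have h1 : J r * ((s (r + 1) : ℤ) * (L : ℤ)) ≤ J r * ((s r : ℤ) * (L : ℤ)) :=
      mul_le_mul_of_nonneg_left h0 (by linarith)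
    have h2 : J r * ((s (r + 1) : ℤ) * (L : ℤ))
        < (J (r + 1) + 1) * ((s (r + 1) : ℤ) * (L : ℤ)) := by linarith
    have h3 := lt_of_mul_lt_mul_right h2 (le_of_lt hmLpos)
    linarith
  have hJ1pos : (0 : ℤ) < J (r + 1) := by linarith
  have hmJ1 : 4 * (b : ℤ) - (s (r + 1) : ℤ) + 1 ≤ (s (r + 1) : ℤ) * J (r + 1) := by
    have he : (J (r + 1) + 1) * ((s (r + 1) : ℤ) * (L : ℤ))
        = ((J (r + 1) + 1) * (s (r + 1) : ℤ)) * (L : ℤ) := by ring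
    have h2 : (4 * (b : ℤ)) * (L : ℤ) < ((J (r + 1) + 1) * (s (r + 1) : ℤ)) * (L : ℤ) := by
      rw [← he]; linarith
    have h3 := lt_of_mul_lt_mul_right h2 (by linarith : (0:ℤ) ≤ (L : ℤ))
    nlinarith only [h3]
  have hmJ0 : 2 * (b : ℤ) - (s (r + 1) : ℤ) + 1 ≤ (s (r + 1) : ℤ) * J r := by
    have h0 : (s r : ℤ) * (L : ℤ) ≤ (2 * (s (r + 1) : ℤ)) * (L : ℤ) :=
      mul_le_mul_of_nonneg_right hsr2m (by linarith)
    have h1 : (J r + 1) * ((s r : ℤ) * (L : ℤ))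
        ≤ (J r + 1) * ((2 * (s (r + 1) : ℤ)) * (L : ℤ)) :=
      mul_le_mul_of_nonneg_left h0 (by linarith)
    have he : (J r + 1) * ((2 * (s (r + 1) : ℤ)) * (L : ℤ))
        = ((J r + 1) * (2 * (s (r + 1) : ℤ))) * (L : ℤ) := by ring
    have h2 : (4 * (b : ℤ)) * (L : ℤ) < ((J r + 1) * (2 * (s (r + 1) : ℤ))) * (L : ℤ) := by
      rw [← he]; linarith
    have h3 := lt_of_mul_lt_mul_right h2 (by linarith : (0:ℤ) ≤ (L : ℤ))
    have h4 : 2 * (2 * (b:ℤ)) < 2 * ((s (r + 1) : ℤ) * J r + (s (r + 1) : ℤ)) := by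
      nlinarith only [h3]
    have h5 := lt_of_mul_lt_mul_left h4 (by norm_num : (0:ℤ) ≤ 2)
    linarith
  -- ceilings
  rw [ge_iff_le]
  have hzb : (z : ℤ) ≤ (b : ℤ) - 1 := by
    have h : (z : ℤ) < (b : ℤ) := by exact_mod_cast hz
    linarith
  have hzpos : (0 : ℤ) ≤ (z : ℤ) := Int.natCast_nonneg z
  have hJ0Q : (0:ℤ) < J r := by linarith
  rcases le_or_gt (b : ℤ) (s (r + 1) : ℤ) with hcase | hcase
  · -- easy case b ≤ m
    have hC1le : ⌈((b : ℚ) - (z : ℚ)) / ((J (r + 1) : ℤ) : ℚ)⌉ ≤ (b : ℤ) - (z : ℤ) := by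
      refine ceil_div_le hJ1pos ?_
      have h0 : ((b:ℤ) - (z:ℤ)) * 1 ≤ ((b:ℤ) - (z:ℤ)) * J (r + 1) :=
        mul_le_mul_of_nonneg_left (by linarith) (by linarith)
      have h : ((b:ℤ) - (z:ℤ)) ≤ ((b:ℤ) - (z:ℤ)) * J (r + 1) := by linarith
      have hq : ((b : ℚ) - (z : ℚ)) ≤ ((((b:ℤ) - (z:ℤ)) : ℤ) : ℚ) * ((J (r + 1) : ℤ) : ℚ) := by
        exact_mod_cast h
      exact hq
    have hC0le : ⌈(z : ℚ) / ((J r : ℤ) : ℚ)⌉ ≤ (z : ℤ) := by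
      refine ceil_div_le hJ0Q ?_
      have h0 : (z:ℤ) * 1 ≤ (z:ℤ) * J r := mul_le_mul_of_nonneg_left (by linarith) hzpos
      have h : (z:ℤ) ≤ (z:ℤ) * J r := by linarith
      have hq : (z : ℚ) ≤ (((z:ℤ) : ℤ) : ℚ) * ((J r : ℤ) : ℚ) := by exact_mod_cast h
      exact hq
    linarith
  · -- main case m < b
    have hmb : (s (r + 1) : ℤ) ≤ (b : ℤ) - 1 := by linarith
    rcases Nat.eq_zero_or_pos z with hz0 | hz1
    · subst hz0
      have hC0eq : ⌈((0:ℕ) : ℚ) / ((J r : ℤ) : ℚ)⌉ = (0:ℤ) := by norm_num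
      rw [hC0eq]
      have hC1le : ⌈((b : ℚ) - ((0:ℕ) : ℚ)) / ((J (r + 1) : ℤ) : ℚ)⌉ ≤ (s (r + 1) : ℤ) := by
        refine ceil_div_le hJ1pos ?_
        have h : (b:ℤ) ≤ (s (r + 1) : ℤ) * J (r + 1) := by linarith
        have hq : ((b:ℚ)) ≤ (((s (r + 1) : ℤ)) : ℚ) * ((J (r + 1) : ℤ) : ℚ) := by
          exact_mod_cast h
        push_cast
        push_cast at hq
        linarith
      linarith
    · -- z ≥ 1
      have hC0ge1 : 1 ≤ ⌈(z : ℚ) / ((J r : ℤ) : ℚ)⌉ := by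
        have hzQ : (0:ℚ) < (z : ℚ) := by exact_mod_cast hz1
        have hJQ : (0:ℚ) < ((J r : ℤ) : ℚ) := by exact_mod_cast hJ0Q
        have hpos : (0:ℚ) < (z : ℚ) / ((J r : ℤ) : ℚ) := div_pos hzQ hJQ
        have h1 := lt_of_lt_of_le hpos (Int.le_ceil _)
        exact_mod_cast h1
      have hlow : (⌈(z : ℚ) / ((J r : ℤ) : ℚ)⌉ - 1) * J r < (z : ℤ) := by
        have h := ceil_div_gt (z : ℚ) hJ0Q
        exact_mod_cast h
      -- abbreviations as ℤ atoms (not lets): name them via generalize-free haves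
      have htb : (⌈(z : ℚ) / ((J r : ℤ) : ℚ)⌉ - 1) * J r ≤ (b : ℤ) - 2 := by linarith
      have ht0 : (0:ℤ) ≤ ⌈(z : ℚ) / ((J r : ℤ) : ℚ)⌉ - 1 := by linarith
      have ht2bm : (⌈(z : ℚ) / ((J r : ℤ) : ℚ)⌉ - 1) * (2 * (b : ℤ) - (s (r + 1) : ℤ) + 1)
          ≤ (s (r + 1) : ℤ) * ((b : ℤ) - 2) := by
        have h1 := mul_le_mul_of_nonneg_left hmJ0 ht0
        have h2 := mul_le_mul_of_nonneg_left htb (by linarith : (0:ℤ) ≤ (s (r + 1) : ℤ))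
        linarith only [h1, h2]
      have hcpos : (0:ℤ) < 2 * (b : ℤ) - (s (r + 1) : ℤ) + 1 := by linarith
      have htm : ⌈(z : ℚ) / ((J r : ℤ) : ℚ)⌉ - 1 ≤ (s (r + 1) : ℤ) - 1 := by
        by_contra hcon
        push_neg at hcon
        have h1 := mul_le_mul_of_nonneg_right
          (show (s (r + 1) : ℤ) ≤ ⌈(z : ℚ) / ((J r : ℤ) : ℚ)⌉ - 1 by linarith)
          (by linarith : (0:ℤ) ≤ 2 * (b : ℤ) - (s (r + 1) : ℤ) + 1)
        have h2 : (s (r + 1) : ℤ) * (2 * (b : ℤ) - (s (r + 1) : ℤ) + 1)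
            ≤ (s (r + 1) : ℤ) * ((b : ℤ) - 2) := by linarith
        have h3 := le_of_mul_le_mul_left h2 (by linarith : (0:ℤ) < (s (r + 1) : ℤ))
        linarith
      have hg : (0:ℤ) ≤ ((s (r + 1) : ℤ) - 1) * (4 * (b : ℤ) - (s (r + 1) : ℤ) + 1)
            * (2 * (b : ℤ) - (s (r + 1) : ℤ) + 1)
          - 2 * (b : ℤ) * (s (r + 1) : ℤ) * ((b : ℤ) - 2)
          - (s (r + 1) : ℤ) * ((b : ℤ) - 1) * (2 * (b : ℤ) - (s (r + 1) : ℤ) + 1) := by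
        have hu : (0:ℤ) ≤ (s (r + 1) : ℤ) - 2 := by linarith
        have hv : (0:ℤ) ≤ (b : ℤ) - 1 - (s (r + 1) : ℤ) := by linarith
        nlinarith only [hu, hv, mul_nonneg hu hv, mul_nonneg (mul_nonneg hu hv) hv,
          mul_nonneg (mul_nonneg hu hu) hv, mul_nonneg hu hu]
      have hmul := mul_le_mul_of_nonneg_left ht2bm (by linarith : (0:ℤ) ≤ 2 * (b : ℤ))
      have hB' : (2 * (b : ℤ) * (⌈(z : ℚ) / ((J r : ℤ) : ℚ)⌉ - 1))
            * (2 * (b : ℤ) - (s (r + 1) : ℤ) + 1)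
          ≤ (((s (r + 1) : ℤ) - 1) * (4 * (b : ℤ) - (s (r + 1) : ℤ) + 1)
              - (s (r + 1) : ℤ) * ((b : ℤ) - 1)) * (2 * (b : ℤ) - (s (r + 1) : ℤ) + 1) := by
        linarith only [hmul, hg]
      have hBt := le_of_mul_le_mul_right hB' hcpos
      have e1 := mul_le_mul_of_nonneg_left hmJ1
        (show (0:ℤ) ≤ (s (r + 1) : ℤ) - 1 - (⌈(z : ℚ) / ((J r : ℤ) : ℚ)⌉ - 1) by linarith)
      have e2 := mul_le_mul_of_nonneg_left hmJ0 ht0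
      have hkey' : (s (r + 1) : ℤ) * ((b : ℤ) - 1)
          ≤ (s (r + 1) : ℤ) * (((s (r + 1) : ℤ) - ⌈(z : ℚ) / ((J r : ℤ) : ℚ)⌉) * J (r + 1)
              + (⌈(z : ℚ) / ((J r : ℤ) : ℚ)⌉ - 1) * J r) := by
        linarith only [e1, e2, hBt]
      have hkey := le_of_mul_le_mul_left hkey' (by linarith : (0:ℤ) < (s (r + 1) : ℤ))
      have hfinal : (b : ℤ) - (z : ℤ)
          ≤ ((s (r + 1) : ℤ) - ⌈(z : ℚ) / ((J r : ℤ) : ℚ)⌉) * J (r + 1) := by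
        linarith only [hkey, hlow, hzb]
      have hC1le : ⌈((b : ℚ) - (z : ℚ)) / ((J (r + 1) : ℤ) : ℚ)⌉
          ≤ (s (r + 1) : ℤ) - ⌈(z : ℚ) / ((J r : ℤ) : ℚ)⌉ := by
        refine ceil_div_le hJ1pos ?_
        have h' : ((b : ℚ) - (z : ℚ))
            ≤ ((((s (r + 1) : ℤ) - ⌈(z : ℚ) / ((J r : ℤ) : ℚ)⌉) : ℤ) : ℚ)
              * ((J (r + 1) : ℤ) : ℚ) := by exact_mod_cast hfinal
        exact h'
      linarith
end

section
/- Let n ≥ 2, b ≥ 2, and B be positive integers, and define the round sizes s : ℕ → ℕ by s(0) = n and s(r+1) = ⌈s(r)/2⌉, and the per-round pull counts J(r) = ⌊(b·B)/(s(r)·⌈log₂ n⌉)⌋. If b·B ≥ n·⌈log₂ n⌉ and B ≥ 4·⌈log₂ n⌉, then for every integer r with r < ⌈log₂ n⌉ − 1, the inequality s(r+1) − 1 ≥ ⌈(b−1)/J(r)⌉ holds. -/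
set_option maxHeartbeats 1000000

/-- Worst-case instance `z = b - 1` of the key proposition (inequality (3)) in
the proof of Theorem 1. With round sizes `s 0 = n`, `s (r+1) = ⌈s r / 2⌉` and
per-round pull counts `J r = ⌊(b·B)/(s r · ⌈log₂ n⌉)⌋`, if `b·B ≥ n·⌈log₂ n⌉`
(C1) and `B ≥ 4·⌈log₂ n⌉` (C2), then for every round `r < ⌈log₂ n⌉ - 1` we have
`s (r+1) - 1 ≥ ⌈(b-1)/J r⌉`. -/
theorem no_incorrect_promotion_worst_case (n b B : ℕ) (hn : 2 ≤ n) (hb : 2 ≤ b) (hB : 1 ≤ B)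
    (s : ℕ → ℕ) (hs0 : s 0 = n)
    (hs : ∀ r, (s (r + 1) : ℤ) = ⌈(s r : ℚ) / 2⌉)
    (J : ℕ → ℤ)
    (hJ : ∀ r, J r = ⌊((b : ℚ) * (B : ℚ)) / ((s r : ℚ) * (Nat.clog 2 n : ℚ))⌋)
    (hC1 : n * Nat.clog 2 n ≤ b * B)
    (hC2 : 4 * Nat.clog 2 n ≤ B)
    (r : ℕ) (hr : (r : ℤ) < (Nat.clog 2 n : ℤ) - 1) :
    (s (r + 1) : ℤ) - 1 ≥ ⌈((b : ℚ) - 1) / ((J r : ℤ) : ℚ)⌉ := by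
  set L := Nat.clog 2 n with hLdef
  have hL2 : 2 ≤ L := by omega
  -- natural-number recurrence for s
  have hsrec : ∀ k, s (k + 1) = (s k + 1) / 2 := by
    intro k
    have h := hs k
    have hq : (⌈(s k : ℚ) / 2⌉ : ℤ) = (((s k + 1) / 2 : ℕ) : ℤ) := by
      set q := (s k + 1) / 2 with hqdef
      have h1 : (2 * q : ℚ) ≤ (s k : ℚ) + 1 := by
        exact_mod_cast (by omega : 2 * q ≤ s k + 1)
      have h2 : ((s k : ℚ)) ≤ 2 * q := by
        exact_mod_cast (by omega : s k ≤ 2 * q)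
      rw [Int.ceil_eq_iff]
      constructor
      · rw [lt_div_iff₀ (by norm_num : (0:ℚ) < 2)]
        push_cast
        linarith
      · rw [div_le_iff₀ (by norm_num : (0:ℚ) < 2)]
        push_cast
        linarith
    rw [hq] at h
    exact_mod_cast h
  have hpos : ∀ k, 1 ≤ s k ∧ s k ≤ n := by
    intro k
    induction k with
    | zero => simp [hs0]; omega
    | succ k ih => rw [hsrec]; omega
  have hlow : ∀ k, n ≤ 2 ^ k * s k := by
    intro k
    induction k with
    | zero => simp [hs0]
    | succ k ih =>
      rw [hsrec, pow_succ]
      have h1 := (hpos k).1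
      have h2 : s k ≤ 2 * ((s k + 1) / 2) := by omega
      calc n ≤ 2 ^ k * s k := ih
        _ ≤ 2 ^ k * (2 * ((s k + 1) / 2)) := Nat.mul_le_mul_left _ h2
        _ = 2 ^ k * 2 * ((s k + 1) / 2) := by ring
  -- m := s r ≥ 3
  have hrL : r + 2 ≤ L := by omega
  have hm3 : 3 ≤ s r := by
    by_contra h
    have h2 : s r ≤ 2 := by omega
    have hnlt : 2 ^ (L - 1) < n := Nat.pow_pred_clog_lt_self (by norm_num) hn
    have hple : 2 ^ (r + 1) ≤ 2 ^ (L - 1) := Nat.pow_le_pow_right (by norm_num) (by omega)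
    have := hlow r
    have : n ≤ 2 ^ r * 2 := this.trans (Nat.mul_le_mul_left _ h2)
    have h2r : 2 ^ r * 2 = 2 ^ (r + 1) := by rw [pow_succ]
    omega
  set m := s r with hmdef
  set c := s (r + 1) with hcdef
  have hc : c = (m + 1) / 2 := hsrec r
  have hmn : m ≤ n := (hpos r).2
  -- J facts
  have hmL : (0 : ℚ) < (m : ℚ) * (L : ℚ) := by positivity
  have hJr := hJ r
  have hJle : (J r : ℚ) * ((m : ℚ) * (L : ℚ)) ≤ (b : ℚ) * (B : ℚ) := by
    rw [hJr]
    rw [← le_div_iff₀ hmL]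
    exact Int.floor_le _
  have hJgt : (b : ℚ) * (B : ℚ) < ((J r : ℚ) + 1) * ((m : ℚ) * (L : ℚ)) := by
    rw [hJr]
    rw [← div_lt_iff₀ hmL]
    exact Int.lt_floor_add_one _
  have hJ1 : 1 ≤ J r := by
    rw [hJr]
    rw [Int.le_floor]
    rw [le_div_iff₀ hmL]
    have : ((m * L : ℕ) : ℚ) ≤ ((b * B : ℕ) : ℚ) := by
      exact_mod_cast le_trans (Nat.mul_le_mul_right _ hmn) hC1
    push_cast at this
    push_cast
    linarith
  -- move to integers
  have hZle : J r * (m * L) ≤ (b : ℤ) * B := by exact_mod_cast hJle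
  have hZgt : (b : ℤ) * B < (J r + 1) * (m * L) := by exact_mod_cast hJgt
  have hC1' : (n : ℤ) * L ≤ (b : ℤ) * B := by exact_mod_cast hC1
  have hC2' : 4 * (L : ℤ) ≤ B := by exact_mod_cast hC2
  -- main integer inequality : b - 1 ≤ (c - 1) * J r
  have hkey : (b : ℤ) - 1 ≤ ((c : ℤ) - 1) * J r := by
    have hc2 : 2 ≤ c := by omega
    have h2c : (m : ℤ) ≤ 2 * c := by
      have : m ≤ 2 * c := by omega
      exact_mod_cast this
    have h2c' : 2 * (c : ℤ) ≤ m + 1 := by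
      have : 2 * c ≤ m + 1 := by omega
      exact_mod_cast this
    rcases le_or_gt (b : ℤ) c with hbc | hbc
    · have h := mul_le_mul_of_nonneg_left hJ1 (by omega : (0:ℤ) ≤ (c : ℤ) - 1)
      linarith
    · -- c ≤ b - 1, m ≤ 2b - 2
      have hm2b : (m : ℤ) ≤ 2 * b - 2 := by omega
      have hb' : (2 : ℤ) ≤ b := by exact_mod_cast hb
      have hm3' : (3 : ℤ) ≤ m := by exact_mod_cast hm3
      have hc2' : (2 : ℤ) ≤ c := by exact_mod_cast hc2
      have hL2' : (2 : ℤ) ≤ L := by exact_mod_cast hL2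
      have hmn' : (m : ℤ) ≤ n := by exact_mod_cast hmn
      -- J r * (m*L) ≥ b*B - m*L + 1 ≥ 4bL - mL + 1
      have hbpos : (0:ℤ) ≤ (b : ℤ) := by positivity
      have hbB : (b : ℤ) * (4 * L) ≤ (b : ℤ) * B := mul_le_mul_of_nonneg_left hC2' hbpos
      have hJlb : (4 * b - m) * L + 1 ≤ J r * ((m : ℤ) * L) := by linarith [hZgt, hbB]
      have hkey2 : ((b : ℤ) - 1) * m ≤ ((c : ℤ) - 1) * (4 * b - m) := by
        nlinarith [mul_nonneg (by omega : (0:ℤ) ≤ (c : ℤ) - 2) (by omega : (0:ℤ) ≤ (b : ℤ) - c),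
          mul_nonneg (by omega : (0:ℤ) ≤ (b : ℤ) + c - 2) (by omega : (0:ℤ) ≤ 2 * (c:ℤ) - m)]
      by_contra hcon
      push_neg at hcon
      have hcon' : ((c : ℤ) - 1) * J r ≤ (b : ℤ) - 2 := by omega
      have hmLpos : (0:ℤ) ≤ (m : ℤ) * L := by positivity
      have h1 := mul_le_mul_of_nonneg_left hJlb (by omega : (0:ℤ) ≤ (c : ℤ) - 1)
      have h2 := mul_le_mul_of_nonneg_right hkey2 (by positivity : (0:ℤ) ≤ (L : ℤ))
      have h3 := mul_le_mul_of_nonneg_right hcon' hmLpos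
      nlinarith [h1, h2, h3, hc2', hL2', hm3']
  -- conclude
  rw [ge_iff_le, Int.ceil_le]
  have hJpos : (0 : ℚ) < ((J r : ℤ) : ℚ) := by exact_mod_cast hJ1
  rw [div_le_iff₀ hJpos]
  exact_mod_cast hkey
end

section
/- For any integers n and b with b ≥ 2 and n > 4b, and any integer x with 3 ≤ x ≤ n, the inequality ⌈x/2⌉ − 1 ≥ ⌈(n/4 − 1)/⌊n/x⌋⌉ holds, where n/4 − 1 is a real number, ⌊n/x⌋ is the (positive) integer floor of n/x, and the outer ceiling is taken in the real numbers. -/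
/-- Ceiling inequality established in Case 2 (`4b < n`) of the proof of
Theorem 1: for integers `b ≥ 2`, `n > 4b` and `3 ≤ x ≤ n`, we have
`⌈x/2⌉ - 1 ≥ ⌈(n/4 - 1)/⌊n/x⌋⌉`, where `n/4 - 1` is a real number, `⌊n/x⌋` is
the (positive) integer floor of `n/x`, and the outer ceiling is taken in `ℝ`. -/
theorem case2_ceiling_inequality (n b x : ℤ) (hb : 2 ≤ b) (hn : 4 * b < n)
    (hx3 : 3 ≤ x) (hxn : x ≤ n) :
    ⌈(x : ℚ) / 2⌉ - 1 ≥ ⌈((n : ℝ) / 4 - 1) / ((⌊(n : ℚ) / (x : ℚ)⌋ : ℤ) : ℝ)⌉ := by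
  have hn9 : 9 ≤ n := by omega
  have hx0 : 0 < x := by omega
  -- floor equals integer division
  have hxnat : ((x.toNat : ℕ) : ℤ) = x := Int.toNat_of_nonneg hx0.le
  have hfloor : ⌊(n : ℚ) / (x : ℚ)⌋ = n / x := by
    rw [show ((x : ℚ)) = ((x.toNat : ℕ) : ℚ) by exact_mod_cast hxnat.symm]
    rw [Rat.floor_intCast_div_natCast, hxnat]
  -- ceil equals (x+1)/2
  have hceil : ⌈(x : ℚ) / 2⌉ = (x + 1) / 2 := by
    have h1 : ⌊((-x : ℤ) : ℚ) / ((2 : ℕ) : ℚ)⌋ = (-x) / 2 := Rat.floor_intCast_div_natCast _ _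
    have h2 : ((-x : ℤ) : ℚ) / ((2 : ℕ) : ℚ) = -((x:ℚ)/2) := by push_cast; ring
    rw [h2, Int.floor_neg] at h1
    omega
  set q : ℤ := n / x with hq
  set k : ℤ := (x + 1) / 2 - 1 with hk
  have hq1 : 1 ≤ q := by
    rw [hq]
    exact Int.le_ediv_iff_mul_le hx0 |>.mpr (by omega)
  -- main integer inequality
  have key : n - 4 ≤ 4 * k * q := by
    have h1 : q * x ≤ n := Int.ediv_mul_le n (by omega) |>.trans (le_refl n)
    have h2 : n < (q + 1) * x := by
      have := Int.lt_ediv_add_one_mul_self n hx0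
      linarith
    have hk1 : x - 2 ≤ 2 * k ∧ 2 * k ≤ x - 1 := by omega
    rcases le_or_gt (2 * x) n with h | h
    · rcases eq_or_lt_of_le hx3 with h3 | h4
      · -- x = 3
        have hke : 1 ≤ k := by omega
        nlinarith [mul_nonneg (by omega : (0:ℤ) ≤ k - 1) (by omega : (0:ℤ) ≤ q), h2]
      · -- x ≥ 4, n ≥ 2x
        have hx4 : 4 ≤ x := by omega
        nlinarith [hk1.1, hq1, h2, mul_pos (by omega : (0:ℤ) < 2*k) (by omega : (0:ℤ) < q)]
    · -- n < 2x
      have : 1 ≤ q := hq1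
      nlinarith [hk1.1, hq1]
  rw [hfloor, hceil, ge_iff_le, Int.ceil_le]
  have hqR : (0 : ℝ) < ((q : ℤ) : ℝ) := by exact_mod_cast hq1.trans_lt' (by norm_num)
  rw [div_le_iff₀ hqR]
  have hcast : ((n : ℝ) - 4) ≤ 4 * (k : ℝ) * (q : ℝ) := by exact_mod_cast key
  have hkc : ((((x + 1) / 2 : ℤ) : ℝ)) = (k : ℝ) + 1 := by
    exact_mod_cast (by omega : ((x+1)/2 : ℤ) = k + 1)
  push_cast
  push_cast at hkc
  rw [hkc]
  nlinarith [hcast]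
end

section
/- For every real number α with 0 < α < 4, there exists an integer b ≥ 2 such that ⌊αb/4⌋ ≥ 1 and 1 < ⌈(b−1)/⌊αb/4⌋⌉; that is, taking x = 4, the inequality ⌈x/2⌉ − 1 ≥ ⌈(b−1)/⌊αb/x⌋⌉ fails for this b. Consequently, the constant 4 in the condition B ≥ 4⌈log₂ n⌉ cannot be replaced by any smaller constant α < 4. -/
/-- Remark 2 of the paper (tightness of condition (C2)): for every real `α` with
`0 < α < 4`, there exists an integer `b ≥ 2` such that `⌊αb/4⌋ ≥ 1` and
`⌈(b-1)/⌊αb/4⌋⌉ > 1`; that is, taking `x = 4`, the inequality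
`⌈x/2⌉ - 1 ≥ ⌈(b-1)/⌊αb/x⌋⌉` fails for this `b`. Hence the constant `4` in the
condition `B ≥ 4⌈log₂ n⌉` cannot be replaced by any smaller constant `α < 4`. -/
theorem condition_C2_tight (α : ℝ) (hα0 : 0 < α) (hα4 : α < 4) :
    ∃ b : ℤ, 2 ≤ b ∧ 1 ≤ ⌊α * (b : ℝ) / 4⌋ ∧
      1 < ⌈((b : ℝ) - 1) / ((⌊α * (b : ℝ) / 4⌋ : ℤ) : ℝ)⌉ := by
  have h4α : (0:ℝ) < 4 - α := by linarith
  set b : ℤ := ⌈4 / α⌉ + ⌈4 / (4 - α)⌉ + 2 with hb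
  have hc1 : (0:ℝ) < 4 / α := by positivity
  have hc2 : (0:ℝ) < 4 / (4 - α) := by positivity
  have hceil1 : (1:ℤ) ≤ ⌈4 / α⌉ := by exact_mod_cast Int.ceil_pos.mpr hc1
  have hceil2 : (1:ℤ) ≤ ⌈4 / (4 - α)⌉ := by exact_mod_cast Int.ceil_pos.mpr hc2
  have hb2 : 2 ≤ b := by omega
  have hbr : (4 / α : ℝ) ≤ (b : ℝ) := by
    have := Int.le_ceil (4 / α)
    have h2 : (⌈4 / α⌉ : ℝ) ≤ (b : ℝ) := by
      exact_mod_cast (by omega : ⌈4 / α⌉ ≤ b)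
    linarith
  have hbr2 : (4 / (4 - α) : ℝ) < (b : ℝ) := by
    have := Int.le_ceil (4 / (4 - α))
    have h2 : (⌈4 / (4 - α)⌉ : ℝ) + 1 ≤ (b : ℝ) := by
      exact_mod_cast (by omega : ⌈4 / (4 - α)⌉ + 1 ≤ b)
    linarith
  have hbpos : (0:ℝ) < (b : ℝ) := by
    have : (0:ℤ) < b := by omega
    exact_mod_cast this
  have hαb : (1:ℝ) ≤ α * (b : ℝ) / 4 := by
    rw [div_le_iff₀ hα0] at hbr
    linarith
  have hfloor1 : (1:ℤ) ≤ ⌊α * (b : ℝ) / 4⌋ := by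
    exact_mod_cast Int.le_floor.mpr (by exact_mod_cast hαb)
  refine ⟨b, hb2, hfloor1, ?_⟩
  have hfloorlt : (⌊α * (b : ℝ) / 4⌋ : ℝ) < (b : ℝ) - 1 := by
    have h1 : (⌊α * (b : ℝ) / 4⌋ : ℝ) ≤ α * (b : ℝ) / 4 := Int.floor_le _
    have h2 : α * (b : ℝ) / 4 < (b : ℝ) - 1 := by
      rw [div_lt_iff₀ h4α] at hbr2
      nlinarith
    linarith
  have hfpos : (0:ℝ) < (⌊α * (b : ℝ) / 4⌋ : ℤ) := by exact_mod_cast hfloor1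
  have : (1:ℝ) < ((b : ℝ) - 1) / ((⌊α * (b : ℝ) / 4⌋ : ℤ) : ℝ) := by
    rw [lt_div_iff₀ hfpos]
    linarith
  exact_mod_cast Int.lt_ceil.mpr (by exact_mod_cast this)
end
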